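/- Let c be the center of the star S_n, let ν be an endpoint of the path P_n, and let v be any vertex of any n-vertex tree T. Then for every integer k ≥ 0, n_k(c, S_n) ≥ n_k(v, T) ≥ n_k(ν, P_n). -/

import Mathlib

open SimpleGraph

/-- A subtree of `G` is a nonempty connected acyclic subgraph of `G`. -/
def IsSubtree {V : Type*} {G : SimpleGraph V} (H : G.Subgraph) : Prop :=
  H.Connected ∧ H.coe.IsAcyclic

/-- `nk G k` : the number of subtrees of `G` with exactly `k` vertices. -/
noncomputable def nk {V : Type*} (G : SimpleGraph V) (k : ℕ) : ℕ :=
  Nat.card {H : G.Subgraph // IsSubtree H ∧ H.verts.ncard = k}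

/-- number of `k`-vertex subtrees of `G` containing the vertex `v`. -/
noncomputable def nkAt {V : Type*} (G : SimpleGraph V) (v : V) (k : ℕ) : ℕ :=
  Nat.card {H : G.Subgraph // IsSubtree H ∧ v ∈ H.verts ∧ H.verts.ncard = k}

/-- `nT G` : total number of subtrees of `G`, counting the empty subtree once. -/
noncomputable def nT {V : Type*} (G : SimpleGraph V) : ℕ :=
  1 + Nat.card {H : G.Subgraph // IsSubtree H}

/-- number of subtrees of `G` containing the vertex `v`. -/
noncomputable def nAt {V : Type*} (G : SimpleGraph V) (v : V) : ℕ :=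
  Nat.card {H : G.Subgraph // IsSubtree H ∧ v ∈ H.verts}

/-- the path on `n` vertices `0 - 1 - ⋯ - (n-1)`. -/
def pathG (n : ℕ) : SimpleGraph (Fin n) :=
  SimpleGraph.fromRel (fun u v => v.val = u.val + 1)

/-- the cycle on `n` vertices. -/
def cycG (n : ℕ) : SimpleGraph (Fin n) :=
  SimpleGraph.fromRel (fun u v => v.val = u.val + 1 ∨ (u.val = 0 ∧ v.val + 1 = n))

/-- the star on `n` vertices with center `0`. -/
def starG (n : ℕ) : SimpleGraph (Fin n) :=
  SimpleGraph.fromRel (fun u _ => u.val = 0)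

/-- `USnl n l` : the cycle `C_l` (on `0,…,l-1`) with `n - l` pendant vertices attached
to the vertex `0`. -/
def USnl (n l : ℕ) : SimpleGraph (Fin n) :=
  SimpleGraph.fromRel (fun u v =>
    (v.val = u.val + 1 ∧ v.val < l) ∨ (u.val = 0 ∧ v.val + 1 = l) ∨ (u.val = 0 ∧ l ≤ v.val))

/-- `UPnl n l` : the cycle `C_l` (on `0,…,l-1`) with a pendant path of length `n - l`
attached to the vertex `l-1`. -/
def UPnl (n l : ℕ) : SimpleGraph (Fin n) :=
  SimpleGraph.fromRel (fun u v => v.val = u.val + 1 ∨ (u.val = 0 ∧ v.val + 1 = l))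

/-- `US_n` : the star `S_n` together with an edge joining two of its leaves. -/
def USn (n : ℕ) : SimpleGraph (Fin n) := USnl n 3

/-- `UP_n` : a triangle with a pendant path, obtained by identifying a vertex of `C_3`
with an end of `P_{n-2}`. -/
def UPn (n : ℕ) : SimpleGraph (Fin n) := UPnl n 3

/-- the Merrifield–Simmons index: the number of independent vertex subsets
(including the empty set). -/
noncomputable def sigmaG {V : Type*} (G : SimpleGraph V) : ℕ :=
  Nat.card {s : Set V // ∀ u ∈ s, ∀ v ∈ s, ¬ G.Adj u v}

/-- the Hosoya index: the number of matchings (including the empty one). -/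
noncomputable def hosoya {V : Type*} (G : SimpleGraph V) : ℕ :=
  Nat.card {s : Set (Sym2 V) // s ⊆ G.edgeSet ∧
    s.Pairwise (fun e f => ∀ v, ¬(v ∈ e ∧ v ∈ f))}

/-- the Wiener index: the sum of the distances over all unordered pairs of vertices. -/
noncomputable def wiener {V : Type*} [Fintype V] (G : SimpleGraph V) : ℕ :=
  (∑ u : V, ∑ v : V, G.dist u v) / 2

/-! In an acyclic graph a connected subgraph is the subgraph induced on its vertex set, so a
subtree is determined by its vertices. In the star every vertex set containing the centre induces a
subtree; relabelling `v` as the centre therefore embeds the `k`-vertex subtrees of `T` through `v`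
into those of the star through its centre. In the path, the vertex set of a subtree through the
endpoint `0` is an initial segment, so there is at most one of each size, whereas growing a
connected vertex set one neighbour at a time gives a `k`-vertex subtree of `T` through `v` for every
`1 ≤ k ≤ n`. -/

namespace SimpleGraph

variable {V : Type*} {G : SimpleGraph V}

theorem isBridge_of_unique_boundary_adj {S : Set V} {x y : V}
    (hS : ∀ a b, G.Adj a b → a ∈ S → b ∉ S → a = x ∧ b = y) (hx : x ∈ S) (hy : y ∉ S) :
    G.IsBridge s(x, y) := by
  refine isBridge_iff_forall_walk_mem_edges.mpr fun p => ?_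
  obtain ⟨d, hd, hdS, hdS'⟩ := p.exists_boundary_dart S hx hy
  obtain ⟨hdx, hdy⟩ := hS _ _ d.adj hdS hdS'
  rw [p.edges_eq_map_darts]
  exact List.mem_map.mpr ⟨d, hd, by rw [← hdx, ← hdy]; rfl⟩

theorem isAcyclic_of_forall_adj_eq_or_eq (c : V) (h : ∀ x y, G.Adj x y → x = c ∨ y = c) :
    G.IsAcyclic := by
  have hbridge : ∀ y, G.Adj c y → G.IsBridge s(c, y) := fun y hcy =>
    isBridge_of_unique_boundary_adj (S := {y}ᶜ)
      (fun a b hab _ hb => by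
        rw [Set.notMem_compl_iff, Set.mem_singleton_iff] at hb
        subst hb
        exact ⟨(h a b hab).resolve_right hcy.ne', rfl⟩)
      hcy.ne (by simp)
  rw [isAcyclic_iff_forall_adj_isBridge]
  intro x y hxy
  rcases h x y hxy with rfl | rfl
  · exact hbridge y hxy
  · rw [Sym2.eq_swap]
    exact hbridge x hxy.symm

theorem Subgraph.Connected.adj_of_isAcyclic {H : G.Subgraph} (hH : H.Connected)
    (hG : G.IsAcyclic) {u v : V} (hu : u ∈ H.verts) (hv : v ∈ H.verts) (huv : G.Adj u v) :
    H.Adj u v := by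
  obtain ⟨p, hp⟩ := (preconnected_iff_forall_exists_walk_subgraph H).mp hH.preconnected hu hv
  have hmem : s(u, v) ∈ p.edges :=
    isBridge_iff_forall_walk_mem_edges.mp (isAcyclic_iff_forall_adj_isBridge.mp hG huv) p
  exact Subgraph.edgeSet_mono hp (p.mem_edges_toSubgraph.mpr hmem)

theorem Subgraph.Connected.eq_induce_verts_of_isAcyclic {H : G.Subgraph} (hH : H.Connected)
    (hG : G.IsAcyclic) : H = (⊤ : G.Subgraph).induce H.verts := by
  refine Subgraph.ext rfl (funext₂ fun u v => propext ⟨fun huv => ?_, fun ⟨hu, hv, huv⟩ => ?_⟩)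
  · exact ⟨H.edge_vert huv, H.edge_vert huv.symm, H.adj_sub huv⟩
  · exact hH.adj_of_isAcyclic hG hu hv huv

theorem Subgraph.Connected.eq_of_isAcyclic_of_verts_eq {H K : G.Subgraph} (hH : H.Connected)
    (hK : K.Connected) (hG : G.IsAcyclic) (h : H.verts = K.verts) : H = K := by
  rw [hH.eq_induce_verts_of_isAcyclic hG, hK.eq_induce_verts_of_isAcyclic hG, h]

theorem Connected.exists_connected_induce_ncard_eq [Finite V] (hG : G.Connected) (v : V)
    {k : ℕ} (hk : 1 ≤ k) (hkV : k ≤ Nat.card V) :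
    ∃ S : Set V, v ∈ S ∧ S.ncard = k ∧ (G.induce S).Connected := by
  induction k, hk using Nat.le_induction with
  | base => exact ⟨{v}, rfl, Set.ncard_singleton v, (G.induce {v}).connected_iff.mpr
      ⟨.of_subsingleton, ⟨⟨v, rfl⟩⟩⟩⟩
  | succ k _ ih =>
    obtain ⟨S, hvS, hSk, hS⟩ := ih (by omega)
    obtain ⟨x, hx⟩ : ∃ x, x ∉ S := by
      by_contra! hS_univ
      rw [Set.eq_univ_of_forall hS_univ, Set.ncard_univ] at hSk
      omega
    obtain ⟨d, -, hdS, hdS'⟩ := (hG.preconnected v x).some.exists_boundary_dart S hvS hx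
    refine ⟨S ∪ {d.snd}, Or.inl hvS, ?_,
      connected_induce_union hS.preconnected .of_subsingleton hdS rfl d.adj⟩
    rw [Set.union_singleton, Set.ncard_insert_of_notMem hdS', hSk]

end SimpleGraph

section nkAt

variable {V : Type*} [Finite V] {G : SimpleGraph V}

theorem one_le_and_le_card_of_nkAt_ne_zero {v : V} {k : ℕ} (h : nkAt G v k ≠ 0) :
    1 ≤ k ∧ k ≤ Nat.card V := by
  obtain ⟨⟨H, -, hv, rfl⟩⟩ := (Nat.card_ne_zero.mp h).1
  exact ⟨(Set.ncard_pos H.verts.toFinite).mpr ⟨v, hv⟩, Set.ncard_le_card _⟩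

theorem nkAt_pos_of_isTree (hG : G.IsTree) (v : V) {k : ℕ} (hk : 1 ≤ k)
    (hkV : k ≤ Nat.card V) : 0 < nkAt G v k := by
  obtain ⟨S, hvS, hSk, hS⟩ := hG.connected.exists_connected_induce_ncard_eq v hk hkV
  exact Nat.card_pos_iff.mpr ⟨⟨⟨(⊤ : G.Subgraph).induce S,
    ⟨connected_induce_iff.mp hS, hG.isAcyclic.subgraph _⟩, hvS, hSk⟩⟩, inferInstance⟩

end nkAt

section pathG

variable {n : ℕ}

theorem pathG_adj {u v : Fin n} : (pathG n).Adj u v ↔ v.val = u.val + 1 ∨ u.val = v.val + 1 := by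
  simp only [pathG, fromRel_adj, ne_eq, Fin.ext_iff]
  omega

theorem pathG_isAcyclic : (pathG n).IsAcyclic := by
  have hbridge : ∀ u w : Fin n, w.val = u.val + 1 → (pathG n).IsBridge s(u, w) :=
    fun u w huw => isBridge_of_unique_boundary_adj (S := {x | x.val ≤ u.val})
      (fun a b hab ha hb => by
        rw [pathG_adj] at hab
        simp only [Set.mem_ofPred_eq, not_le] at ha hb
        exact ⟨Fin.ext (by omega), Fin.ext (by omega)⟩)
      (by simp) (by simp; omega)
  rw [isAcyclic_iff_forall_adj_isBridge]
  intro u w huw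
  rcases pathG_adj.mp huw with h | h
  · exact hbridge u w h
  · rw [Sym2.eq_swap]
    exact hbridge w u h

theorem pathG_isLowerSet_verts_of_connected (hn : 0 < n) {H : (pathG n).Subgraph}
    (hH : H.Connected) (h0 : ⟨0, hn⟩ ∈ H.verts) : IsLowerSet H.verts := by
  intro j i hij hj
  by_contra hi
  obtain ⟨p, hp⟩ := (Subgraph.preconnected_iff_forall_exists_walk_subgraph H).mp
    hH.preconnected hj h0
  -- a walk in `H` from `j` down to `0` has to step from `i + 1` onto `i`
  obtain ⟨d, hd, hdS, hdS'⟩ := p.exists_boundary_dart {x | i < x}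
    (lt_of_le_of_ne hij fun h => hi (h ▸ hj))
    (by simp only [Set.mem_ofPred_eq, Fin.lt_def]; omega)
  have hdi : d.snd = i := by
    have := pathG_adj.mp d.adj
    simp only [Set.mem_ofPred_eq, Fin.lt_def, not_lt] at hdS hdS'
    exact Fin.ext (by omega)
  exact hi (hdi ▸ Subgraph.verts_mono hp
    (p.mem_verts_toSubgraph.mpr (p.dart_snd_mem_support_of_mem_darts hd)))

theorem nkAt_pathG_zero_le_one (hn : 0 < n) (k : ℕ) : nkAt (pathG n) ⟨0, hn⟩ k ≤ 1 := by
  refine Finite.card_le_one_iff_subsingleton.mpr ⟨?_⟩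
  rintro ⟨H, hH, hH0, hHk⟩ ⟨K, hK, hK0, hKk⟩
  have hverts : H.verts = K.verts := by
    rcases (pathG_isLowerSet_verts_of_connected hn hH.1 hH0).total
      (pathG_isLowerSet_verts_of_connected hn hK.1 hK0) with h | h
    · exact Set.eq_of_subset_of_ncard_le h (by rw [hHk, hKk])
    · exact (Set.eq_of_subset_of_ncard_le h (by rw [hHk, hKk])).symm
  exact Subtype.ext (hH.1.eq_of_isAcyclic_of_verts_eq hK.1 pathG_isAcyclic hverts)

end pathG

section starG

variable {n : ℕ}

theorem starG_adj {u v : Fin n} : (starG n).Adj u v ↔ u ≠ v ∧ (u.val = 0 ∨ v.val = 0) := by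
  simp [starG]

theorem starG_isAcyclic (hn : 0 < n) : (starG n).IsAcyclic :=
  isAcyclic_of_forall_adj_eq_or_eq ⟨0, hn⟩ fun x y hxy => by
    rw [starG_adj] at hxy
    rcases hxy.2 with h | h
    · exact Or.inl (Fin.ext h)
    · exact Or.inr (Fin.ext h)

theorem isSubtree_induce_starG (hn : 0 < n) {A : Set (Fin n)} (hA : ⟨0, hn⟩ ∈ A) :
    IsSubtree ((⊤ : (starG n).Subgraph).induce A) := by
  refine ⟨connected_induce_iff.mp ?_, (starG_isAcyclic hn).subgraph _⟩
  rw [connected_iff_exists_forall_reachable]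
  refine ⟨⟨_, hA⟩, fun z => ?_⟩
  by_cases hz : z.1 = ⟨0, hn⟩
  · rw [show z = ⟨_, hA⟩ from Subtype.ext hz]
  · refine Adj.reachable ?_
    simp only [comap_adj, Function.Embedding.subtype_apply, starG_adj]
    exact ⟨Ne.symm hz, Or.inl trivial⟩

theorem nkAt_le_nkAt_starG_zero (hn : 0 < n) {G : SimpleGraph (Fin n)} (hG : G.IsAcyclic)
    (v : Fin n) (k : ℕ) : nkAt G v k ≤ nkAt (starG n) ⟨0, hn⟩ k := by
  classical
  let σ := Equiv.swap v ⟨0, hn⟩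
  have hσ : ∀ H : G.Subgraph, v ∈ H.verts → (⟨0, hn⟩ : Fin n) ∈ σ '' H.verts :=
    fun H hv => ⟨v, hv, Equiv.swap_apply_left _ _⟩
  refine Nat.card_le_card_of_injective (fun H => ⟨(⊤ : (starG n).Subgraph).induce (σ '' H.1.verts),
    isSubtree_induce_starG hn (hσ _ H.2.2.1), hσ _ H.2.2.1,
    (Set.ncard_image_of_injective _ σ.injective).trans H.2.2.2⟩) ?_
  rintro ⟨H, hH, _⟩ ⟨K, hK, _⟩ h
  exact Subtype.ext (hH.1.eq_of_isAcyclic_of_verts_eq hK.1 hG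
    (Set.image_injective.mpr σ.injective (congrArg Subgraph.verts (congrArg Subtype.val h))))

end starG

/-- with `c` the center of the star `S_n`, `ν` an endpoint of the path
`P_n`, and `v` any vertex of an `n`-vertex tree `T`, we have
`n_k(c, S_n) ≥ n_k(v, T) ≥ n_k(ν, P_n)` for every `k ≥ 0`. -/
theorem nkAt_tree_extremal (n : ℕ) (hn : 0 < n) (T : SimpleGraph (Fin n))
    (hT : T.IsTree) (v : Fin n) (k : ℕ) :
    nkAt (pathG n) ⟨0, hn⟩ k ≤ nkAt T v k ∧ nkAt T v k ≤ nkAt (starG n) ⟨0, hn⟩ k := by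
  refine ⟨?_, nkAt_le_nkAt_starG_zero hn hT.isAcyclic v k⟩
  rcases Nat.eq_zero_or_pos (nkAt (pathG n) ⟨0, hn⟩ k) with h | h
  · simp [h]
  obtain ⟨hk, hkn⟩ := one_le_and_le_card_of_nkAt_ne_zero h.ne'
  exact (nkAt_pathG_zero_le_one hn k).trans (nkAt_pos_of_isTree hT v hk hkn)
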